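/- The set of derivations of the Leibniz algebra L₅ is a linear subspace of End(V) of dimension 5. -/

import Mathlib

/-- `V = ℂ⁴`. -/
abbrev V : Type := Fin 4 → ℂ

/-- standard basis: `e 0 = e₁`, ..., `e 3 = e₄`. -/
def e (i : Fin 4) : V := Pi.single i 1

/-- Bracket of the Leibniz algebra `L₅`:
`⟦e₁,e₁⟧ = e₃`, `⟦e₁,e₂⟧ = e₄`, `⟦e₃,e₁⟧ = e₄`, all other basis products zero. -/
def br (x y : V) : V :=
  (x 0 * y 0) • e 2 + (x 0 * y 1 + x 2 * y 0) • e 3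

/-- A derivation. -/
def IsDer (d : V →ₗ[ℂ] V) : Prop :=
  ∀ x y : V, d (br x y) = br (d x) y + br x (d y)

/-!
Since `e₃ = ⟦e₁,e₁⟧` and `e₄ = ⟦e₁,e₂⟧ = ⟦e₃,e₁⟧`, the Leibniz rule expresses `d e₃` through `d e₁`,
and `d e₄` in two ways; comparing them, together with the rule on `⟦e₂,e₁⟧ = 0`, forces
`d e₂ = 2a e₂ + g e₄`, where `a` is the `e₁`-coordinate of `d e₁`. The free parameters are the four
coordinates of `d e₁` and `g`, and every choice of them gives a derivation, so the derivations are
the image of an injective linear map from `ℂ⁵`.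
-/

lemma br_apply (x y : V) : br x y = ![0, 0, x 0 * y 0, x 0 * y 1 + x 2 * y 0] := by
  funext i; fin_cases i <;> simp [br, e]

lemma br_e_zero_e_zero : br (e 0) (e 0) = e 2 := by
  funext i; fin_cases i <;> simp [br_apply, e]

lemma br_e_zero_e_one : br (e 0) (e 1) = e 3 := by
  funext i; fin_cases i <;> simp [br_apply, e]

lemma br_e_two_e_zero : br (e 2) (e 0) = e 3 := by
  funext i; fin_cases i <;> simp [br_apply, e]

lemma br_e_one_e_zero : br (e 1) (e 0) = 0 := by
  funext i; fin_cases i <;> simp [br_apply, e]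

lemma ext_e {f g : Module.End ℂ V} (h0 : f (e 0) = g (e 0)) (h1 : f (e 1) = g (e 1))
    (h2 : f (e 2) = g (e 2)) (h3 : f (e 3) = g (e 3)) : f = g :=
  (Pi.basisFun ℂ (Fin 4)).ext fun j => by
    rw [Pi.basisFun_apply]; fin_cases j; exacts [h0, h1, h2, h3]

def derivationMap : (Fin 5 → ℂ) →ₗ[ℂ] Module.End ℂ V :=
  LinearMap.mk₂ ℂ (fun p x => ![p 0 * x 0, p 1 * x 0 + 2 * p 0 * x 1, p 2 * x 0 + 2 * p 0 * x 2,
      p 3 * x 0 + p 4 * x 1 + (p 1 + p 2) * x 2 + 3 * p 0 * x 3])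
    (fun _ _ _ => by funext i; fin_cases i <;> simp <;> ring)
    (fun _ _ _ => by funext i; fin_cases i <;> simp <;> ring)
    (fun _ _ _ => by funext i; fin_cases i <;> simp <;> ring)
    (fun _ _ _ => by funext i; fin_cases i <;> simp <;> ring)

def derivationParams (d : Module.End ℂ V) : Fin 5 → ℂ :=
  ![d (e 0) 0, d (e 0) 1, d (e 0) 2, d (e 0) 3, d (e 1) 3]

lemma isDer_derivationMap (p : Fin 5 → ℂ) : IsDer (derivationMap p) := by
  intro x y
  funext i
  fin_cases i <;> simp [derivationMap, br_apply] <;> ring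

lemma derivationParams_derivationMap (p : Fin 5 → ℂ) :
    derivationParams (derivationMap p) = p := by
  funext i; fin_cases i <;> simp [derivationParams, derivationMap, e]

lemma IsDer.apply_e_two {d : Module.End ℂ V} (hd : IsDer d) :
    d (e 2) = ![0, 0, 2 * d (e 0) 0, d (e 0) 1 + d (e 0) 2] := by
  rw [← br_e_zero_e_zero, hd, br_apply, br_apply]
  funext i; fin_cases i <;> simp [e] <;> ring

lemma IsDer.apply_e_three {d : Module.End ℂ V} (hd : IsDer d) :
    d (e 3) = ![0, 0, 0, 3 * d (e 0) 0] := by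
  rw [← br_e_two_e_zero, hd, hd.apply_e_two, br_apply, br_apply]
  funext i; fin_cases i <;> simp [e]; ring

lemma IsDer.apply_e_one {d : Module.End ℂ V} (hd : IsDer d) :
    d (e 1) = ![0, 2 * d (e 0) 0, 0, d (e 1) 3] := by
  have h10 := hd (e 1) (e 0)
  rw [br_e_one_e_zero, map_zero, br_apply, br_apply] at h10
  have h01 := hd (e 0) (e 1)
  rw [br_e_zero_e_one, hd.apply_e_three, br_apply, br_apply] at h01
  have h0 : d (e 1) 0 = 0 := by simpa [e] using (congrFun h10 2).symm
  have h2 : d (e 1) 2 = 0 := by simpa [e] using (congrFun h10 3).symm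
  have h1 : d (e 1) 1 = 2 * d (e 0) 0 := by
    have h := congrFun h01 3
    simp [e] at h ⊢
    linear_combination -h
  funext i; fin_cases i <;> simp [h0, h1, h2]

lemma IsDer.derivationMap_derivationParams {d : Module.End ℂ V} (hd : IsDer d) :
    derivationMap (derivationParams d) = d := by
  apply ext_e
  · funext i; fin_cases i <;> simp [derivationMap, derivationParams, e]
  · rw [hd.apply_e_one]; funext i; fin_cases i <;> simp [derivationMap, derivationParams, e]
  · rw [hd.apply_e_two]; funext i; fin_cases i <;> simp [derivationMap, derivationParams, e]
  · rw [hd.apply_e_three]; funext i; fin_cases i <;> simp [derivationMap, derivationParams, e]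

lemma derivationMap_injective : Function.Injective derivationMap :=
  Function.LeftInverse.injective derivationParams_derivationMap

lemma isDer_iff_mem_range_derivationMap {d : Module.End ℂ V} :
    IsDer d ↔ d ∈ LinearMap.range derivationMap :=
  ⟨fun hd => ⟨_, hd.derivationMap_derivationParams⟩, fun ⟨p, hp⟩ => hp ▸ isDer_derivationMap p⟩

theorem derivations_of_L5 :
    ∃ S : Submodule ℂ (V →ₗ[ℂ] V),
      (S : Set (V →ₗ[ℂ] V)) = {d | IsDer d} ∧ Module.finrank ℂ S = 5 :=
  ⟨LinearMap.range derivationMap, Set.ext fun _ => isDer_iff_mem_range_derivationMap.symm, by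
    rw [LinearMap.finrank_range_of_inj derivationMap_injective, Module.finrank_fin_fun]⟩
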